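/- arXiv:2311.18571 — 8 statements merged into one kernel-verified Lean document; each statement's English description precedes it below -/
import Mathlib

section
/- Let R be an order in an étale algebra K over the fraction field of a Dedekind domain. A fractional R-ideal I is invertible (i.e. I·(R:I) = R) if and only if I is locally principal, i.e. for every maximal ideal p of R the completion I_p is a principal fractional R_p-ideal. -/
universe u

set_option maxHeartbeats 1000000
set_option synthInstance.maxHeartbeats 400000

/-- A `Z`-lattice in `K`: a finitely generated `Z`-submodule containing a `Q`-basis of `K`. -/
def IsLat (Z : Type*) (Q K : Type u) [CommRing Z] [Field Q] [Algebra Z Q]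
    [CommRing K] [Algebra Q K] [Algebra Z K] (I : Submodule Z K) : Prop :=
  I.FG ∧ Submodule.span Q (I : Set K) = ⊤

section Aux

variable {A : Type*} [CommRing A]

/-- The image in the adic completion of an element outside a maximal ideal is a unit. -/
theorem aux_isUnit {p : Ideal A} (hp : p.IsMaximal) {u : A} (hu : u ∉ p) :
    IsUnit (algebraMap A (AdicCompletion p A) u) := by
  obtain ⟨v, t, ht, hvt⟩ := hp.exists_inv hu
  have hsmul : ∀ n : ℕ, (p ^ n • ⊤ : Ideal A) = p ^ n := fun n => by
    rw [smul_eq_mul, Ideal.mul_top]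
  have key : ∀ {m n : ℕ}, m ≤ n →
      (Ideal.Quotient.mk (p ^ m • ⊤ : Ideal A)) (v * ∑ k ∈ Finset.range n, t ^ k)
        = (Ideal.Quotient.mk (p ^ m • ⊤ : Ideal A)) (v * ∑ k ∈ Finset.range m, t ^ k) := by
    intro m n hmn
    rw [Ideal.Quotient.mk_eq_mk_iff_sub_mem, hsmul, ← mul_sub,
      ← Finset.sum_Ico_eq_sub _ hmn]
    refine Ideal.mul_mem_left _ _ (Ideal.sum_mem _ fun k hk => ?_)
    rw [Finset.mem_Ico] at hk
    have hpow : t ^ k = t ^ m * t ^ (k - m) := by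
      rw [← pow_add]
      congr 1
      omega
    rw [hpow]
    exact Ideal.mul_mem_right _ _ (Ideal.pow_mem_pow ht m)
  refine IsUnit.of_mul_eq_one
    (⟨fun n => Ideal.Quotient.mk (p ^ n • ⊤ : Ideal A) (v * ∑ k ∈ Finset.range n, t ^ k),
      fun {m n} hmn => ?_⟩ : AdicCompletion p A) ?_
  · rw [AdicCompletion.transitionMap_ideal_mk]
    exact key hmn
  · ext n
    have h1 : (algebraMap A (AdicCompletion p A) u).val n
        = Ideal.Quotient.mk (p ^ n • ⊤ : Ideal A) u := rfl
    show Ideal.Quotient.mk (p ^ n • ⊤ : Ideal A) u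
        * Ideal.Quotient.mk (p ^ n • ⊤ : Ideal A) (v * ∑ k ∈ Finset.range n, t ^ k)
      = (1 : A ⧸ (p ^ n • ⊤ : Ideal A))
    rw [← map_mul, ← map_one (Ideal.Quotient.mk (p ^ n • ⊤ : Ideal A)),
      Ideal.Quotient.mk_eq_mk_iff_sub_mem, hsmul]
    have h2 : u * (v * ∑ k ∈ Finset.range n, t ^ k) - 1 = -(t ^ n) := by
      linear_combination (∑ k ∈ Finset.range n, t ^ k) * hvt - mul_geom_sum t n
    rw [h2]
    exact neg_mem (Ideal.pow_mem_pow ht n)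

/-- Completion of scalar multiple of the identity acts as scalar multiplication. -/
theorem aux_map_smul_id {M : Type*} [AddCommGroup M] [Module A M]
    (p : Ideal A) (u : A) (x : AdicCompletion p M) :
    AdicCompletion.map p (u • (LinearMap.id : M →ₗ[A] M)) x
      = algebraMap A (AdicCompletion p A) u • x := by
  ext n
  rw [AdicCompletion.map_val_apply, AdicCompletion.smul_eval]
  obtain ⟨y, hy⟩ := Submodule.Quotient.mk_surjective _ (x.val n)
  have h1 : (algebraMap A (AdicCompletion p A) u).val n
      = Ideal.Quotient.mk (p ^ n • ⊤ : Ideal A) u := rfl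
  rw [← hy, h1, AdicCompletion.mk_smul_mk, LinearMap.reduceModIdeal_apply,
    ← Submodule.Quotient.mk_smul]
  rfl

/-- Pushing membership in `p • S` through a linear map. -/
theorem aux_smul_map {M N : Type*} [AddCommGroup M] [Module A M]
    [AddCommGroup N] [Module A N] (f : M →ₗ[A] N) (p : Ideal A) (S : Submodule A M)
    {T : Submodule A N} (hT : ∀ m ∈ S, f m ∈ T) {v : M} (hv : v ∈ p • S) : f v ∈ p • T := by
  refine Submodule.smul_induction_on hv (fun t ht z hz => ?_) (fun z z' hz hz' => ?_)
  · rw [map_smul]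
    exact Submodule.smul_mem_smul ht (hT z hz)
  · rw [map_add]
    exact Submodule.add_mem _ hz hz'

/-- If two maps compose both ways to multiplication by an element outside a maximal ideal,
their adic completions are inverse isomorphisms up to a unit. -/
theorem aux_equiv {M N : Type*} [AddCommGroup M] [Module A M] [AddCommGroup N] [Module A N]
    {p : Ideal A} (hp : p.IsMaximal) {w : A} (hw : w ∉ p) (f : M →ₗ[A] N) (g : N →ₗ[A] M)
    (hfg : f ∘ₗ g = w • LinearMap.id) (hgf : g ∘ₗ f = w • LinearMap.id) :
    Nonempty (AdicCompletion p M ≃ₗ[AdicCompletion p A] AdicCompletion p N) := by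
  set c := algebraMap A (AdicCompletion p A) w with hc_def
  have hc : IsUnit c := aux_isUnit hp hw
  set F := AdicCompletion.map p f with hF_def
  set G := AdicCompletion.map p g with hG_def
  have hFG : ∀ x : AdicCompletion p N, F (G x) = c • x := fun x => by
    rw [hF_def, hG_def, AdicCompletion.map_comp_apply, hfg, aux_map_smul_id]
  have hGF : ∀ x : AdicCompletion p M, G (F x) = c • x := fun x => by
    rw [hF_def, hG_def, AdicCompletion.map_comp_apply, hgf, aux_map_smul_id]
  have hinj : Function.Injective F := by
    intro x y hxy
    have h2 : c • x = c • y := by rw [← hGF x, ← hGF y, hxy]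
    have h3 : (↑hc.unit⁻¹ : AdicCompletion p A) • c • x
        = (↑hc.unit⁻¹ : AdicCompletion p A) • c • y := by rw [h2]
    rwa [← mul_smul, ← mul_smul, hc.val_inv_mul, one_smul, one_smul] at h3
  have hsurj : Function.Surjective F := by
    intro y
    refine ⟨G ((↑hc.unit⁻¹ : AdicCompletion p A) • y), ?_⟩
    rw [hFG, ← mul_smul, hc.mul_val_inv, one_smul]
  exact ⟨LinearEquiv.ofBijective F ⟨hinj, hsurj⟩⟩

/-- If the adic completion of `M` at `p` is free of rank one, then `M` is generated by
a single element modulo `p • M`. -/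
theorem aux_gen {M : Type*} [AddCommGroup M] [Module A M] (p : Ideal A)
    (ψ : AdicCompletion p M ≃ₗ[AdicCompletion p A] AdicCompletion p A) :
    ∃ x : M, ∀ m : M, ∃ s : A, m - s • x ∈ (p • ⊤ : Submodule A M) := by
  set g0 := ψ.symm 1 with hg0
  obtain ⟨x', hx'⟩ := Submodule.Quotient.mk_surjective
    ((p ^ 1 • ⊤ : Submodule A M)) (g0.val 1)
  refine ⟨x', fun m => ?_⟩
  have h1 : AdicCompletion.of p M m = ψ (AdicCompletion.of p M m) • g0 := by
    calc AdicCompletion.of p M m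
        = ψ.symm (ψ (AdicCompletion.of p M m)) := (ψ.symm_apply_apply _).symm
      _ = ψ.symm (ψ (AdicCompletion.of p M m) • (1 : AdicCompletion p A)) := by
          rw [smul_eq_mul, mul_one]
      _ = ψ (AdicCompletion.of p M m) • ψ.symm 1 := map_smul ψ.symm _ _
  set c := ψ (AdicCompletion.of p M m) with hc_def
  obtain ⟨s, hs⟩ := Ideal.Quotient.mk_surjective (I := (p ^ 1 • ⊤ : Ideal A)) (c.val 1)
  refine ⟨s, ?_⟩
  have h2 : (AdicCompletion.of p M m).val 1 = (c • g0).val 1 := by rw [← h1]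
  rw [AdicCompletion.smul_eval, AdicCompletion.of_apply, ← hs, ← hx',
    AdicCompletion.mk_smul_mk, ← Submodule.Quotient.mk_smul] at h2
  have h3 := (Submodule.Quotient.eq _).mp h2
  rwa [pow_one] at h3

end Aux

variable (Z : Type*) (Q K : Type u) [CommRing Z] [IsDedekindDomain Z] [Field Q]
  [Algebra Z Q] [IsFractionRing Z Q] [CommRing K] [Algebra Q K] [Algebra Z K]
  [IsScalarTower Z Q K] [FiniteDimensional Q K] [Algebra.Etale Q K]

/- `R` is an order in the étale algebra `K`: a subring which is a `Z`-lattice.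
Fractional `R`-ideals are sub-`R`-modules of `K` which are `Z`-lattices. -/
variable (R : Subalgebra Z K) (hR : IsLat Z Q K (Subalgebra.toSubmodule R))

/-- A fractional `R`-ideal `I` is invertible, i.e. `I · (R : I) = R`, if and only if it is
locally principal: for every maximal ideal `p` of `R`, the `p`-adic completion `I_p` is a
principal (i.e. free of rank one) fractional ideal over the completion `R_p`. -/
theorem invertible_iff_locally_principal (I : Submodule ↥R K)
    (hI : IsLat Z Q K (I.restrictScalars Z)) :
    I * (1 / I) = 1 ↔
      ∀ p : Ideal ↥R, p.IsMaximal →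
        Nonempty (AdicCompletion p ↥I ≃ₗ[AdicCompletion p ↥R] AdicCompletion p ↥R) := by
  classical
  have halgmap : ∀ s : ↥R, algebraMap ↥R K s = (s : K) := fun s => rfl
  have hsmulK : ∀ (s : ↥R) (k : K), s • k = (s : K) * k := fun s k => by
    rw [Algebra.smul_def, halgmap]
  constructor
  · -- invertible → locally principal
    intro h p hp
    have hexists : ∃ a ∈ I, ∃ b ∈ 1 / I,
        a * b ∉ (Submodule.map (Algebra.linearMap ↥R K) (p : Submodule ↥R ↥R)) := by
      by_contra hcon
      push_neg at hcon
      have hmul : I * (1 / I) ≤ Submodule.map (Algebra.linearMap ↥R K) (p : Submodule ↥R ↥R) :=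
        Submodule.mul_le.2 fun a ha b hb => hcon a ha b hb
      rw [h] at hmul
      have h1 : (1 : K) ∈ Submodule.map (Algebra.linearMap ↥R K) (p : Submodule ↥R ↥R) :=
        hmul (Submodule.mem_one.mpr ⟨1, map_one _⟩)
      obtain ⟨t, htp, hteq⟩ := h1
      have ht1 : t = 1 := by
        apply Subtype.ext
        simpa [halgmap] using hteq
      exact hp.ne_top (p.eq_top_iff_one.mpr (ht1 ▸ htp))
    obtain ⟨a, ha, b, hb, hab⟩ := hexists
    have habmem : a * b ∈ (1 : Submodule ↥R K) := h ▸ Submodule.mul_mem_mul ha hb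
    obtain ⟨w, hw⟩ := Submodule.mem_one.mp habmem
    have hwp : w ∉ p := fun hwp => hab ⟨w, hwp, hw⟩
    have hbmem : ∀ m : ↥I, b * (m : K) ∈ R := fun m => by
      obtain ⟨y, hy⟩ := Submodule.mem_one.mp
        ((Submodule.mem_div_iff_forall_mul_mem.mp hb) _ m.2)
      rw [← hy, halgmap]
      exact y.2
    let f : ↥I →ₗ[↥R] ↥R :=
      { toFun := fun m => ⟨b * (m : K), hbmem m⟩
        map_add' := fun m m' => by
          apply Subtype.ext
          show b * ((m : K) + (m' : K)) = b * (m : K) + b * (m' : K)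
          ring
        map_smul' := fun s m => by
          apply Subtype.ext
          show b * ((s • m : ↥I) : K) = (s : K) * (b * (m : K))
          rw [show ((s • m : ↥I) : K) = s • (m : K) from rfl, hsmulK]
          ring }
    have hgmem : ∀ s : ↥R, a * (s : K) ∈ I := fun s => by
      have : a * (s : K) = s • a := by rw [hsmulK, mul_comm]
      exact this ▸ I.smul_mem s ha
    let g : ↥R →ₗ[↥R] ↥I :=
      { toFun := fun s => ⟨a * (s : K), hgmem s⟩
        map_add' := fun s s' => by
          apply Subtype.ext
          show a * ((s : K) + (s' : K)) = a * (s : K) + a * (s' : K)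
          ring
        map_smul' := fun s s' => by
          apply Subtype.ext
          show a * ((s : K) * (s' : K)) = s • (a * (s' : K))
          rw [hsmulK]
          ring }
    have hfg : f ∘ₗ g = w • LinearMap.id := by
      refine LinearMap.ext fun s => Subtype.ext ?_
      show b * (a * (s : K)) = ((w • s : ↥R) : K)
      show b * (a * (s : K)) = ((w * s : ↥R) : K)
      push_cast
      rw [← halgmap w, hw]
      ring
    have hgf : g ∘ₗ f = w • LinearMap.id := by
      refine LinearMap.ext fun m => Subtype.ext ?_
      show a * (b * (m : K)) = ((w • m : ↥I) : K)
      rw [show ((w • m : ↥I) : K) = w • (m : K) from rfl, hsmulK, ← halgmap w, hw]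
      ring
    exact aux_equiv hp hwp f g hfg hgf
  · -- locally principal → invertible
    intro hloc
    have hle : I * (1 / I) ≤ 1 := Submodule.mul_le.2 fun a ha b hb => by
      rw [mul_comm]
      exact Submodule.mem_div_iff_forall_mul_mem.mp hb a ha
    set 𝔞 : Ideal ↥R := Submodule.comap (Algebra.linearMap ↥R K) (I * (1 / I)) with h𝔞
    have hIfg : I.FG := Submodule.FG.of_restrictScalars Z (S := I) hI.1
    have htop : 𝔞 = ⊤ := by
      by_contra hne
      obtain ⟨p, hp, hple⟩ := Ideal.exists_le_maximal _ hne
      obtain ⟨ψ⟩ := hloc p hp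
      obtain ⟨x', hstep⟩ := aux_gen p ψ
      set x : K := (x' : K) with hx_def
      have hxI : x ∈ I := x'.2
      have hIle : ∀ a ∈ I, ∃ s : ↥R, a - (s : K) * x ∈ p • I := by
        intro a ha
        obtain ⟨s, hs⟩ := hstep ⟨a, ha⟩
        refine ⟨s, ?_⟩
        have h4 := aux_smul_map I.subtype p ⊤ (T := I) (fun m _ => m.2) hs
        have h5 : I.subtype (⟨a, ha⟩ - s • x') = a - (s : K) * x := by
          show ((⟨a, ha⟩ - s • x' : ↥I) : K) = a - (s : K) * x
          rw [show ((⟨a, ha⟩ - s • x' : ↥I) : K) = a - ((s • x' : ↥I) : K) from rfl,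
            show ((s • x' : ↥I) : K) = s • (x' : K) from rfl, hsmulK]
        rwa [h5] at h4
      set Sx : Submodule ↥R K := Submodule.span ↥R {x} with hSx
      have hNle : Submodule.map Sx.mkQ I ≤ p • Submodule.map Sx.mkQ I := by
        rintro _ ⟨a, ha, rfl⟩
        obtain ⟨s, hs⟩ := hIle a ha
        have h6 : Sx.mkQ a = Sx.mkQ (a - (s : K) * x) := by
          have hz : Sx.mkQ ((s : K) * x) = 0 := by
            rw [Submodule.mkQ_apply, Submodule.Quotient.mk_eq_zero]
            exact Submodule.mem_span_singleton.mpr ⟨s, (hsmulK s x).symm⟩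
          rw [map_sub, hz, sub_zero]
        have h7 : Sx.mkQ (a - (s : K) * x) ∈ p • Submodule.map Sx.mkQ I :=
          aux_smul_map Sx.mkQ p I (fun m hm => Submodule.mem_map_of_mem hm) hs
        rw [h6]
        exact h7
      obtain ⟨r, hr1, hr0⟩ := Submodule.exists_sub_one_mem_and_smul_eq_zero_of_fg_of_le_smul
        p _ (hIfg.map _) hNle
      have hrI : ∀ a ∈ I, r • a ∈ Sx := by
        intro a ha
        have h8 := hr0 _ (Submodule.mem_map_of_mem (f := Sx.mkQ) ha)
        rw [← map_smul, Submodule.mkQ_apply, Submodule.Quotient.mk_eq_zero] at h8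
        exact h8
      have hrp : r ∉ p := by
        intro hrp
        have : (1 : ↥R) ∈ p := by simpa using p.sub_mem hrp hr1
        exact hp.ne_top (p.eq_top_iff_one.mpr this)
      have hspan : ∀ k ∈ Submodule.span Q (I : Set K), (r : K) * k ∈ Ideal.span {x} := by
        intro k hk
        induction hk using Submodule.span_induction with
        | mem a haI =>
          obtain ⟨s, hs⟩ := Submodule.mem_span_singleton.mp (hrI a haI)
          have h9 : (r : K) * a = (s : K) * x := by
            rw [← hsmulK, ← hsmulK, hs]
          rw [h9]
          exact Ideal.mem_span_singleton'.mpr ⟨(s : K), rfl⟩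
        | zero => simp
        | add a a' _ _ ha ha' =>
          rw [mul_add]
          exact Ideal.add_mem _ ha ha'
        | smul q k _ hk =>
          rw [mul_smul_comm, Algebra.smul_def]
          exact Ideal.mul_mem_left _ _ hk
      have hone : (1 : K) ∈ Submodule.span Q (I : Set K) := by
        have h10 := hI.2
        rw [show ((I.restrictScalars Z : Submodule Z K) : Set K) = (I : Set K) from rfl] at h10
        rw [h10]
        trivial
      obtain ⟨y, hy⟩ := Ideal.mem_span_singleton'.mp (by simpa using hspan 1 hone)
      have hbdiv : y * (r : K) ∈ (1 : Submodule ↥R K) / I := by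
        rw [Submodule.mem_div_iff_forall_mul_mem]
        intro k hk
        obtain ⟨s, hs⟩ := Submodule.mem_span_singleton.mp (hrI k hk)
        have h11 : (r : K) * k = (s : K) * x := by rw [← hsmulK, ← hsmulK, hs]
        have h12 : y * (r : K) * k = ((s * r : ↥R) : K) := by
          push_cast
          calc y * (r : K) * k = y * ((r : K) * k) := by ring
            _ = y * ((s : K) * x) := by rw [h11]
            _ = (s : K) * (y * x) := by ring
            _ = (s : K) * (r : K) := by rw [hy]
        rw [h12]
        exact Submodule.mem_one.mpr ⟨s * r, halgmap _⟩
      have hmem : x * (y * (r : K)) ∈ I * ((1 : Submodule ↥R K) / I) :=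
        Submodule.mul_mem_mul hxI hbdiv
      have hxb : x * (y * (r : K)) = algebraMap ↥R K (r * r) := by
        rw [halgmap]
        push_cast
        calc x * (y * (r : K)) = (y * x) * (r : K) := by ring
          _ = (r : K) * (r : K) := by rw [hy]
      have hrr : r * r ∈ 𝔞 := by
        rw [h𝔞]
        refine Submodule.mem_comap.mpr ?_
        show algebraMap ↥R K (r * r) ∈ I * (1 / I)
        rw [← hxb]
        exact hmem
      have : r ∈ p := (hp.isPrime.mem_or_mem (hple hrr)).elim id id
      exact hrp this
    refine le_antisymm hle ?_
    intro z hz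
    obtain ⟨w, hw⟩ := Submodule.mem_one.mp hz
    have hw𝔞 : w ∈ 𝔞 := htop ▸ Submodule.mem_top
    have := Submodule.mem_comap.mp hw𝔞
    rwa [show Algebra.linearMap ↥R K w = algebraMap ↥R K w from rfl, hw] at this
end

section
/- Let R be an order in an étale algebra K and p a maximal ideal of R which is not invertible as a fractional R-ideal. Then (p : p) = (R : p). -/
universe u

variable (Z : Type*) (Q K : Type u) [CommRing Z] [IsDedekindDomain Z] [Field Q]
  [Algebra Z Q] [IsFractionRing Z Q] [CommRing K] [Algebra Q K] [Algebra Z K]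
  [IsScalarTower Z Q K] [FiniteDimensional Q K] [Algebra.Etale Q K]

/- `R` is an order in the étale algebra `K`: a subring which is a `Z`-lattice.
Fractional `R`-ideals are sub-`R`-modules of `K` which are `Z`-lattices. -/
variable (R : Subalgebra Z K) (hR : IsLat Z Q K (Subalgebra.toSubmodule R))

set_option maxHeartbeats 1000000 in
/-- If a maximal ideal `p` of the order `R` is not invertible as a fractional `R`-ideal,
then `(p : p) = (R : p)`. -/
theorem colon_self_eq_one_div_of_not_invertible (p : Ideal ↥R) (hp : p.IsMaximal)
    (hninv : ¬ (Submodule.map (Algebra.linearMap ↥R K) p *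
        (1 / Submodule.map (Algebra.linearMap ↥R K) p) = 1)) :
    Submodule.map (Algebra.linearMap ↥R K) p / Submodule.map (Algebra.linearMap ↥R K) p =
      1 / Submodule.map (Algebra.linearMap ↥R K) p := by
  set f := Algebra.linearMap ↥R K with hf
  have hfinj : Function.Injective f := fun a b h => Subtype.ext h
  set P := Submodule.map f p with hP
  have hPle1 : P ≤ 1 := by
    rw [Submodule.one_eq_range]
    rintro x ⟨a, -, rfl⟩
    exact ⟨a, rfl⟩
  have h1le : (1 : Submodule ↥R K) ≤ 1 / P := by
    intro x hx
    rw [Submodule.mem_div_iff_forall_mul_mem]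
    intro y hy
    rw [Submodule.one_eq_range] at hx ⊢
    obtain ⟨a, rfl⟩ := hx
    obtain ⟨b, hb, rfl⟩ := hy
    exact ⟨a * b, by simp [hf, Algebra.linearMap_apply, map_mul]⟩
  have hone : (1 : K) ∈ 1 / P := h1le (Submodule.one_le.mp le_rfl)
  have hPleM : P ≤ P * (1 / P) := fun x hx =>
    mul_one x ▸ Submodule.mul_mem_mul hx hone
  have hMle1 : P * (1 / P) ≤ 1 := Submodule.mul_one_div_le_one
  have hple : p ≤ Submodule.comap f (P * (1 / P)) := by
    rw [← Submodule.comap_map_eq_of_injective hfinj p]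
    exact Submodule.comap_mono hPleM
  by_cases hJ : Submodule.comap f (P * (1 / P)) = ⊤
  · exfalso
    apply hninv
    refine le_antisymm hMle1 ?_
    rintro x hx
    rw [Submodule.one_eq_range] at hx
    obtain ⟨a, rfl⟩ := hx
    exact (hJ ▸ Submodule.mem_top : a ∈ Submodule.comap f (P * (1 / P)))
  · have hpJ : p = Submodule.comap f (P * (1 / P)) := hp.eq_of_le hJ hple
    have hMP : P * (1 / P) = P := by
      have : Submodule.map f (Submodule.comap f (P * (1 / P))) = P * (1 / P) := by
        rw [Submodule.map_comap_eq, inf_eq_right.mpr]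
        rw [← Submodule.one_eq_range]
        exact hMle1
      rw [← this, ← hpJ]
    refine le_antisymm ?_ ?_
    · intro x hx
      rw [Submodule.mem_div_iff_forall_mul_mem] at hx ⊢
      intro y hy
      exact hPle1 (hx y hy)
    · intro x hx
      rw [Submodule.mem_div_iff_forall_mul_mem] at hx ⊢
      intro y hy
      rw [← hMP]
      rw [mul_comm]
      exact Submodule.mul_mem_mul hx hy
end

section
/- Let R be an order in an étale algebra K, let I, J be fractional R-ideals and p a maximal ideal of R. If 1 ∈ (I:J)(J:I) + p, then the localizations (equivalently, completions) of I and J at p are isomorphic as R_p-modules. -/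
universe u

variable (Z : Type*) (Q K : Type u) [CommRing Z] [IsDedekindDomain Z] [Field Q]
  [Algebra Z Q] [IsFractionRing Z Q] [CommRing K] [Algebra Q K] [Algebra Z K]
  [IsScalarTower Z Q K] [FiniteDimensional Q K] [Algebra.Etale Q K]

/- `R` is an order in the étale algebra `K`: a subring which is a `Z`-lattice.
Fractional `R`-ideals are sub-`R`-modules of `K` which are `Z`-lattices. -/
variable (R : Subalgebra Z K) (hR : IsLat Z Q K (Subalgebra.toSubmodule R))

section Aux

variable {A K' : Type*} [CommRing A] [CommRing K'] [Algebra A K']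

/-- From `a, b, t` with `aJ ⊆ I`, `bI ⊆ J` and `a * b = t` mapping to a unit of the
localization at `p`, construct an isomorphism of localized modules. -/
lemma equiv_of_single_mul (I J : Submodule A K') (p : Ideal A) [p.IsPrime]
    (a b : K') (t : A) (ht : t ∈ p.primeCompl)
    (haJ : ∀ x ∈ J, a * x ∈ I) (hbI : ∀ x ∈ I, b * x ∈ J)
    (hab : a * b = algebraMap A K' t) :
    Nonempty (LocalizedModule p.primeCompl ↥I ≃ₗ[Localization p.primeCompl]
      LocalizedModule p.primeCompl ↥J) := by
  set S := p.primeCompl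
  let Aₚ := Localization S
  let g : ↥J →ₗ[A] ↥I :=
  { toFun := fun x => ⟨a * x, haJ x x.2⟩
    map_add' := by intro x y; ext; simp [mul_add]
    map_smul' := by
      intro r x; ext
      simp only [SetLike.val_smul, RingHom.id_apply, Algebra.smul_def]
      ring }
  let f : ↥I →ₗ[A] ↥J :=
  { toFun := fun x => ⟨b * x, hbI x x.2⟩
    map_add' := by intro x y; ext; simp [mul_add]
    map_smul' := by
      intro r x; ext
      simp only [SetLike.val_smul, RingHom.id_apply, Algebra.smul_def]
      ring }
  have hgf : ∀ x : ↥I, g (f x) = t • x := by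
    intro x; ext
    show a * (b * (x : K')) = _
    rw [SetLike.val_smul, Algebra.smul_def, ← hab]; ring
  have hfg : ∀ x : ↥J, f (g x) = t • x := by
    intro x; ext
    show b * (a * (x : K')) = _
    rw [SetLike.val_smul, Algebra.smul_def, ← hab]; ring
  let F := (IsLocalizedModule.map S (LocalizedModule.mkLinearMap S ↥I)
      (LocalizedModule.mkLinearMap S ↥J) f).extendScalarsOfIsLocalization S Aₚ
  let G := (IsLocalizedModule.map S (LocalizedModule.mkLinearMap S ↥J)
      (LocalizedModule.mkLinearMap S ↥I) g).extendScalarsOfIsLocalization S Aₚ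
  have hF : ∀ (x : ↥I) (s : S), F (LocalizedModule.mk x s) = LocalizedModule.mk (f x) s := by
    intro x s
    show (IsLocalizedModule.map S (LocalizedModule.mkLinearMap S ↥I)
      (LocalizedModule.mkLinearMap S ↥J) f) (LocalizedModule.mk x s) = _
    rw [IsLocalizedModule.mk_eq_mk', IsLocalizedModule.map_mk', ← IsLocalizedModule.mk_eq_mk']
  have hG : ∀ (x : ↥J) (s : S), G (LocalizedModule.mk x s) = LocalizedModule.mk (g x) s := by
    intro x s
    show (IsLocalizedModule.map S (LocalizedModule.mkLinearMap S ↥J)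
      (LocalizedModule.mkLinearMap S ↥I) g) (LocalizedModule.mk x s) = _
    rw [IsLocalizedModule.mk_eq_mk', IsLocalizedModule.map_mk', ← IsLocalizedModule.mk_eq_mk']
  have ut : IsUnit (algebraMap A Aₚ t) := IsLocalization.map_units Aₚ ⟨t, ht⟩
  have hGF : ∀ z, G (F z) = algebraMap A Aₚ t • z := by
    intro z
    induction z using LocalizedModule.induction_on with
    | h x s =>
      rw [hF, hG, hgf, algebraMap_smul, LocalizedModule.smul'_mk]
  have hFG : ∀ z, F (G z) = algebraMap A Aₚ t • z := by
    intro z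
    induction z using LocalizedModule.induction_on with
    | h x s =>
      rw [hG, hF, hfg, algebraMap_smul, LocalizedModule.smul'_mk]
  refine ⟨LinearEquiv.ofLinear F (((ut.unit⁻¹ : Aₚˣ) : Aₚ) • G) ?_ ?_⟩
  · ext z
    simp only [LinearMap.coe_comp, Function.comp_apply, LinearMap.smul_apply, LinearMap.id_apply,
      LinearMap.id_coe, id_eq]
    rw [map_smul, hFG, smul_smul]
    rw [IsUnit.val_inv_mul, one_smul]
  · ext z
    simp only [LinearMap.coe_comp, Function.comp_apply, LinearMap.smul_apply, LinearMap.id_apply,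
      LinearMap.id_coe, id_eq]
    rw [hGF, smul_smul, IsUnit.val_inv_mul, one_smul]

/-- The multiplier ring of the pair of fractional ideals `I`, `J`:
elements of `K'` stabilizing both `I` and `J`. -/
def mulStab (I J : Submodule A K') : Subalgebra A K' :=
  Submodule.toSubalgebra ((I / I) ⊓ (J / J))
    (by
      rw [Submodule.mem_inf]
      constructor <;> · rw [Submodule.mem_div_iff_forall_mul_mem]; intro y hy; rwa [one_mul])
    (by
      intro x y hx hy
      rw [Submodule.mem_inf] at hx hy
      obtain ⟨hx1, hx2⟩ := hx
      obtain ⟨hy1, hy2⟩ := hy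
      rw [Submodule.mem_div_iff_forall_mul_mem] at hx1 hx2 hy1 hy2
      rw [Submodule.mem_inf]
      constructor <;> · rw [Submodule.mem_div_iff_forall_mul_mem]; intro z hz
                        rw [mul_assoc]
                        first
                        | exact hx1 _ (hy1 z hz)
                        | exact hx2 _ (hy2 z hz))

variable (I J : Submodule A K')

lemma mem_mulStab_iff (x : K') :
    x ∈ mulStab I J ↔ (∀ y ∈ I, x * y ∈ I) ∧ ∀ y ∈ J, x * y ∈ J := by
  show x ∈ (_ ⊓ _ : Submodule A K') ↔ _
  rw [Submodule.mem_inf, Submodule.mem_div_iff_forall_mul_mem,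
    Submodule.mem_div_iff_forall_mul_mem]

lemma mulStab_smul_div₁ {s d : K'} (hs : s ∈ mulStab I J) (hd : d ∈ I / J) :
    s * d ∈ I / J := by
  rw [Submodule.mem_div_iff_forall_mul_mem] at hd ⊢
  intro y hy
  rw [mul_assoc]
  exact ((mem_mulStab_iff I J s).mp hs).1 _ (hd y hy)

lemma mulStab_smul_div₂ {s e : K'} (hs : s ∈ mulStab I J) (he : e ∈ J / I) :
    s * e ∈ J / I := by
  rw [Submodule.mem_div_iff_forall_mul_mem] at he ⊢
  intro y hy
  rw [mul_assoc]
  exact ((mem_mulStab_iff I J s).mp hs).2 _ (he y hy)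

lemma div_mul_div_le_mulStab : (I / J) * (J / I) ≤ Subalgebra.toSubmodule (mulStab I J) := by
  rw [Submodule.mul_le]
  intro d hd e he
  rw [Submodule.mem_div_iff_forall_mul_mem] at hd he
  rw [Subalgebra.mem_toSubmodule, mem_mulStab_iff]
  constructor
  · intro y hy
    have : d * (e * y) ∈ I := hd _ (he y hy)
    rwa [← mul_assoc] at this
  · intro y hy
    have : e * (d * y) ∈ J := he _ (hd y hy)
    rwa [show e * (d * y) = d * e * y by ring] at this

set_option maxHeartbeats 2000000 in
set_option synthInstance.maxHeartbeats 400000 in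
lemma exists_single_generator (B : Subalgebra A K') [Module.Finite A ↥B]
    (hBle : (I / J) * (J / I) ≤ Subalgebra.toSubmodule B)
    (hstabD : ∀ s ∈ B, ∀ x ∈ I / J, s * x ∈ I / J)
    (hstabE : ∀ s ∈ B, ∀ x ∈ J / I, s * x ∈ J / I)
    (p : Ideal A) [p.IsMaximal]
    (h : (1 : K') ∈ (I / J) * (J / I) + Submodule.map (Algebra.linearMap A K') p) :
    ∃ a b : K', ∃ t : A, t ∉ p ∧ a ∈ I / J ∧ b ∈ J / I ∧
      a * b = algebraMap A K' t := by
  classical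
  -- decompose the hypothesis
  rw [Submodule.add_eq_sup, Submodule.mem_sup] at h
  obtain ⟨c, hc, w, hw, hcw⟩ := h
  obtain ⟨π, hπ, rfl⟩ := Submodule.mem_map.mp hw
  have hcB : c ∈ B := hBle hc
  set 𝔮 : Ideal ↥B := p.map (algebraMap A ↥B) with h𝔮
  set mkQ := Ideal.Quotient.mk 𝔮 with hmkQ
  have hcoeB : ∀ r : A, ((algebraMap A ↥B r : ↥B) : K') = algebraMap A K' r := by
    intro r; rfl
  have hc1 : mkQ ⟨c, hcB⟩ = 1 := by
    have hsub : (⟨c, hcB⟩ : ↥B) = 1 - algebraMap A ↥B π := by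
      apply Subtype.ext
      have : c = 1 - algebraMap A K' π := by
        rw [← hcw]; simp [Algebra.linearMap_apply]
      simpa [hcoeB] using this
    rw [hsub, map_sub, map_one,
      Ideal.Quotient.eq_zero_iff_mem.mpr (Ideal.mem_map_of_mem _ hπ), sub_zero]
  -- instances
  haveI : Module.Finite A (↥B ⧸ 𝔮) :=
    Module.Finite.of_surjective (Ideal.Quotient.mkₐ A 𝔮).toLinearMap
      Ideal.Quotient.mk_surjective
  haveI : Module.Finite (A ⧸ p) (↥B ⧸ 𝔮) :=
    Module.Finite.of_restrictScalars_finite A (A ⧸ p) _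
  haveI : IsArtinianRing (A ⧸ p) := by
    letI := Ideal.Quotient.field p
    exact isArtinian_of_tower (A ⧸ p) (inferInstanceAs (IsArtinian (A ⧸ p) (A ⧸ p)))
  haveI : IsArtinian (A ⧸ p) (↥B ⧸ 𝔮) := isArtinian_of_fg_of_artinian'
  haveI : IsArtinianRing (↥B ⧸ 𝔮) := isArtinian_of_tower (A ⧸ p) inferInstance
  -- the finitely many maximal ideals
  have hfinmax : {n : Ideal (↥B ⧸ 𝔮) | n.IsMaximal}.Finite :=
    IsArtinianRing.setOfPred_isMaximal_finite _
  set MS := {n : Ideal (↥B ⧸ 𝔮) | n.IsMaximal} with hMS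
  letI : Fintype ↥MS := hfinmax.fintype
  -- selection of single products outside each maximal ideal
  have sel : ∀ n : ↥MS, ∃ u : ↥B,
      (∃ d ∈ I / J, ∃ e ∈ J / I, (u : K') = d * e) ∧ mkQ u ∉ n.1 := by
    intro n
    have hone : (1 : ↥B ⧸ 𝔮) ∉ n.1 := fun hh => n.2.ne_top ((Ideal.eq_top_iff_one _).mpr hh)
    have key : ∀ (x : K') (hx : x ∈ (I / J) * (J / I)),
        mkQ ⟨x, hBle hx⟩ ∈ n.1 ∨ ∃ u : ↥B,
          (∃ d ∈ I / J, ∃ e ∈ J / I, (u : K') = d * e) ∧ mkQ u ∉ n.1 := by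
      intro x hx
      refine Submodule.mul_induction_on'
        (C := fun x hx => mkQ ⟨x, hBle hx⟩ ∈ n.1 ∨ ∃ u : ↥B,
          (∃ d ∈ I / J, ∃ e ∈ J / I, (u : K') = d * e) ∧ mkQ u ∉ n.1) ?_ ?_ hx
      · intro d hd e he
        by_cases hmem : mkQ ⟨d * e, hBle (Submodule.mul_mem_mul hd he)⟩ ∈ n.1
        · exact Or.inl hmem
        · exact Or.inr ⟨_, ⟨d, hd, e, he, rfl⟩, hmem⟩
      · intro x hx y hy ihx ihy
        rcases ihx with ihx | ihx
        · rcases ihy with ihy | ihy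
          · left
            have : (⟨x + y, hBle (add_mem hx hy)⟩ : ↥B)
                = ⟨x, hBle hx⟩ + ⟨y, hBle hy⟩ := rfl
            rw [this, map_add]
            exact add_mem ihx ihy
          · exact Or.inr ihy
        · exact Or.inr ihx
    rcases key c hc with hbad | good
    · rw [hc1] at hbad
      exact absurd hbad hone
    · exact good
  choose u hu hun using sel
  choose d hd e he hude using hu
  -- CRT elements
  have hcop : Pairwise fun n m : ↥MS => IsCoprime n.1 m.1 := fun n m hnm =>
    Ideal.isCoprime_iff_sup_eq.mpr (Ideal.IsMaximal.coprime_of_ne n.2 m.2 (fun hh => hnm (Subtype.ext hh)))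
  have crt : ∀ n : ↥MS, ∃ fn : ↥B,
      ∀ m : ↥MS, Ideal.Quotient.mk m.1 (mkQ fn) = if m = n then 1 else 0 := by
    intro n
    obtain ⟨r, hr⟩ := Ideal.pi_quotient_surjective hcop (fun m => if m = n then 1 else 0)
    obtain ⟨fn, rfl⟩ := Ideal.Quotient.mk_surjective r
    exact ⟨fn, fun m => hr m⟩
  choose f hf using crt
  -- the candidate elements
  set a : K' := ∑ n : ↥MS, ((f n : K') * d n) with ha_def
  set b : K' := ∑ n : ↥MS, ((f n : K') * e n) with hb_def
  have ha : a ∈ I / J := Submodule.sum_mem _ (fun n _ => hstabD _ (f n).2 _ (hd n))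
  have hb : b ∈ J / I := Submodule.sum_mem _ (fun n _ => hstabE _ (f n).2 _ (he n))
  set uB : ↥B := ∑ n : ↥MS, ∑ m : ↥MS,
      f n * f m * ⟨d n * e m, hBle (Submodule.mul_mem_mul (hd n) (he m))⟩ with huB_def
  have huBK : (uB : K') = a * b := by
    rw [huB_def, ha_def, hb_def, Finset.sum_mul_sum]
    push_cast
    refine Finset.sum_congr rfl fun n _ => Finset.sum_congr rfl fun m _ => by ring
  have hunit : IsUnit (mkQ uB) := by
    by_contra hnu
    obtain ⟨n, hnmax, hmem⟩ := exists_max_ideal_of_mem_nonunits (mem_nonunits_iff.mpr hnu)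
    have hn' : n ∈ MS := hnmax
    set n0 : ↥MS := ⟨n, hn'⟩ with hn0
    set ψ : ↥B →+* (↥B ⧸ 𝔮) ⧸ n := (Ideal.Quotient.mk n).comp mkQ with hψ
    have hfψ : ∀ i : ↥MS, ψ (f i) = if n0 = i then 1 else 0 := fun i => hf i n0
    set g : ↥MS → ↥MS → (↥B ⧸ 𝔮) ⧸ n := fun i j =>
      ψ (f i) * ψ (f j) * ψ ⟨d i * e j, hBle (Submodule.mul_mem_mul (hd i) (he j))⟩ with hg
    have key : ψ uB = ψ (u n0) := by
      have expand : ψ uB = ∑ i : ↥MS, ∑ j : ↥MS, g i j := by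
        rw [huB_def, map_sum]
        refine Finset.sum_congr rfl fun i _ => ?_
        rw [map_sum]
        refine Finset.sum_congr rfl fun j _ => by rw [hg, map_mul, map_mul]
      have outer : (∑ i : ↥MS, ∑ j : ↥MS, g i j) = ∑ j : ↥MS, g n0 j :=
        Finset.sum_eq_single n0
          (fun i _ hi => Finset.sum_eq_zero fun j _ => by
            simp only [hg]
            rw [hfψ i, if_neg (fun hh => hi hh.symm), zero_mul, zero_mul])
          (by intro hh; exact absurd (Finset.mem_univ _) hh)
      have inner : (∑ j : ↥MS, g n0 j) = g n0 n0 :=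
        Finset.sum_eq_single n0
          (fun j _ hj => by
            simp only [hg]
            rw [hfψ j, if_neg (fun hh => hj hh.symm), mul_zero, zero_mul])
          (by intro hh; exact absurd (Finset.mem_univ _) hh)
      rw [expand, outer, inner]
      simp only [hg]
      rw [hfψ, if_pos rfl, one_mul, one_mul]
      congr 1
      exact Subtype.ext (hude n0).symm
    have h0 : ψ (u n0) = 0 := by
      rw [← key, hψ]
      exact Ideal.Quotient.eq_zero_iff_mem.mpr hmem
    exact hun n0 (Ideal.Quotient.eq_zero_iff_mem.mp h0)
  obtain ⟨vb, hvb⟩ := hunit.exists_right_inv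
  obtain ⟨v, rfl⟩ := Ideal.Quotient.mk_surjective vb
  have h1w : (1 : ↥B) - uB * v ∈ 𝔮 := by
    have h0 : mkQ (1 - uB * v) = 0 := by
      rw [map_sub, map_mul, map_one]
      rw [show mkQ v = Ideal.Quotient.mk 𝔮 v from rfl] at *
      rw [hvb, sub_self]
    exact Ideal.Quotient.eq_zero_iff_mem.mp h0
  set wB : ↥B := uB * v with hwB
  set 𝔴 : Ideal ↥B := Ideal.span {wB} with h𝔴
  haveI : Module.Finite A (↥B ⧸ 𝔴) :=
    Module.Finite.of_surjective (Ideal.Quotient.mkₐ A 𝔴).toLinearMap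
      Ideal.Quotient.mk_surjective
  have hQle : ∀ z ∈ 𝔮, ∀ x : ↥B,
      Ideal.Quotient.mk 𝔴 (x * z) ∈ p • (⊤ : Submodule A (↥B ⧸ 𝔴)) := by
    intro z hz
    rw [h𝔮, Ideal.map] at hz
    refine Submodule.span_induction ?_ ?_ ?_ ?_ hz
    · rintro z ⟨π', hπ', rfl⟩ x
      have hx : x * algebraMap A ↥B π' = π' • x := by rw [mul_comm, ← Algebra.smul_def]
      rw [hx, ← Ideal.Quotient.mkₐ_eq_mk A, map_smul]
      exact Submodule.smul_mem_smul hπ' Submodule.mem_top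
    · intro x; rw [mul_zero, map_zero]; exact zero_mem _
    · intro z₁ z₂ _ _ ih₁ ih₂ x
      rw [mul_add, map_add]
      exact add_mem (ih₁ x) (ih₂ x)
    · intro bb z _ ih x
      rw [smul_eq_mul, show x * (bb * z) = (x * bb) * z by ring]
      exact ih (x * bb)
  have hle : (⊤ : Submodule A (↥B ⧸ 𝔴)) ≤ p • ⊤ := by
    intro xb _
    obtain ⟨x, rfl⟩ := Ideal.Quotient.mk_surjective xb
    have h0 : Ideal.Quotient.mk 𝔴 (x * wB) = 0 :=
      Ideal.Quotient.eq_zero_iff_mem.mpr (Ideal.mem_span_singleton.mpr ⟨x, mul_comm _ _⟩)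
    have hxsplit : Ideal.Quotient.mk 𝔴 x = Ideal.Quotient.mk 𝔴 (x * (1 - wB)) := by
      rw [mul_sub, mul_one, map_sub, h0, sub_zero]
    rw [hxsplit]
    exact hQle _ h1w x
  obtain ⟨t, htp1, htz⟩ :=
    Submodule.exists_sub_one_mem_and_smul_eq_zero_of_fg_of_le_smul p ⊤
      (Module.finite_def.mp inferInstance) hle
  have htnp : t ∉ p := by
    intro hh
    have h1 : (1 : A) ∈ p := by simpa using sub_mem hh htp1
    exact (Ideal.IsMaximal.ne_top ‹p.IsMaximal›) ((Ideal.eq_top_iff_one p).mpr h1)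
  have hspan : algebraMap A ↥B t ∈ 𝔴 := by
    have h2 := htz (Ideal.Quotient.mk 𝔴 1) Submodule.mem_top
    rw [← Ideal.Quotient.mkₐ_eq_mk A, ← map_smul] at h2
    rw [← Ideal.Quotient.eq_zero_iff_mem]
    calc Ideal.Quotient.mk 𝔴 (algebraMap A ↥B t)
        = (Ideal.Quotient.mkₐ A 𝔴) (t • (1 : ↥B)) := by
          rw [Algebra.algebraMap_eq_smul_one]; rfl
      _ = 0 := h2
  obtain ⟨v₂, hv₂⟩ := Ideal.mem_span_singleton.mp hspan
  refine ⟨a, b * ((v * v₂ : ↥B) : K'), t, htnp, ha, ?_, ?_⟩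
  · have h3 := hstabE _ (v * v₂).2 _ hb
    rwa [mul_comm] at h3
  · have h4 : algebraMap A K' t = ((wB * v₂ : ↥B) : K') := by
      rw [← hv₂]; exact (hcoeB t).symm
    rw [h4, hwB]
    push_cast
    rw [huBK]
    ring

end Aux

set_option maxHeartbeats 1000000 in
set_option synthInstance.maxHeartbeats 400000 in
/-- If `1 ∈ (I : J)(J : I) + p` for fractional `R`-ideals `I`, `J` and a maximal ideal `p`
of the order `R`, then the localizations of `I` and `J` at `p` are isomorphic as
`R_p`-modules. -/
theorem p_equivalent_of_one_mem (I J : Submodule ↥R K)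
    (hI : IsLat Z Q K (I.restrictScalars Z)) (hJ : IsLat Z Q K (J.restrictScalars Z))
    (p : Ideal ↥R) [p.IsMaximal]
    (h : (1 : K) ∈ (I / J) * (J / I) + Submodule.map (Algebra.linearMap ↥R K) p) :
    Nonempty (LocalizedModule p.primeCompl ↥I ≃ₗ[Localization p.primeCompl]
      LocalizedModule p.primeCompl ↥J) := by
  classical
  -- Step 1: find a nonzerodivisor `w : Z` with `algebraMap Z K w ∈ I`.
  have h1 : (1 : K) ∈ Submodule.span Q ((I.restrictScalars Z : Submodule Z K) : Set K) := by
    rw [hI.2]; trivial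
  obtain ⟨n, cf, g, hsum⟩ := Submodule.mem_span_set'.mp h1
  obtain ⟨w, hw⟩ := IsLocalization.exist_integer_multiples (nonZeroDivisors Z)
    (Finset.univ : Finset (Fin n)) cf
  have hδI : algebraMap Z K (w : Z) ∈ I := by
    have : algebraMap Z K (w : Z) = (w : Z) • (1 : K) := by
      rw [Algebra.algebraMap_eq_smul_one]
    rw [this, ← hsum, Finset.smul_sum]
    have hmem : ∀ i : Fin n, (w : Z) • (cf i • (g i : K)) ∈ I.restrictScalars Z := by
      intro i
      obtain ⟨z, hz⟩ := hw i (Finset.mem_univ i)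
      rw [← smul_assoc]
      have : (w : Z) • cf i = algebraMap Z Q z := hz.symm
      rw [show ((w : Z) • cf i) = ((w : Z) • cf i : Q) from rfl, this, algebraMap_smul]
      exact Submodule.smul_mem _ _ (g i).2
    have : ∑ i : Fin n, (w : Z) • (cf i • (g i : K)) ∈ I.restrictScalars Z :=
      Submodule.sum_mem _ (fun i _ => hmem i)
    exact this
  -- Step 2: `mulStab I J` is a finite module over the order.
  haveI hfin : Module.Finite ↥R ↥(mulStab I J) := by
    set δ : K := algebraMap Z K (w : Z) with hδ
    set μ : K →ₗ[Z] K := LinearMap.mulLeft Z δ with hμ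
    have hinj : Function.Injective μ := by
      intro x y hxy
      have hq : algebraMap Z Q (w : Z) ≠ 0 :=
        IsFractionRing.to_map_ne_zero_of_mem_nonZeroDivisors w.2
      have hsm : ∀ z : K, μ z = algebraMap Z Q (w : Z) • z := by
        intro z
        show δ * z = _
        rw [hδ, IsScalarTower.algebraMap_apply Z Q K, Algebra.smul_def]
      rw [hsm, hsm] at hxy
      exact smul_right_injective K hq hxy
    set T : Submodule Z K := (Subalgebra.toSubmodule (mulStab I J)).restrictScalars Z with hT
    have hmap : T.map μ ≤ I.restrictScalars Z := by
      rintro _ ⟨x, hx, rfl⟩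
      have hx' : x ∈ mulStab I J := hx
      have := ((mem_mulStab_iff I J x).mp hx').1 δ hδI
      show δ * x ∈ I.restrictScalars Z
      rw [Submodule.restrictScalars_mem, mul_comm]
      exact this
    haveI : IsNoetherian Z ↥(I.restrictScalars Z) :=
      isNoetherian_of_fg_of_noetherian _ hI.1
    have h1' : (T.map μ).FG := by
      have heq : Submodule.map (I.restrictScalars Z).subtype
          (Submodule.comap (I.restrictScalars Z).subtype (T.map μ)) = T.map μ := by
        rw [Submodule.map_comap_subtype]
        exact inf_eq_right.mpr hmap
      rw [← heq]
      exact (IsNoetherian.noetherian _).map _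
    have hTfg : T.FG := Submodule.fg_of_fg_map_injective μ hinj h1'
    have hTfg' : (Subalgebra.toSubmodule (mulStab I J)).FG :=
      Submodule.FG.of_restrictScalars Z (S := _) hTfg
    exact Module.Finite.iff_fg.mpr hTfg'
  -- Step 3: extract a single product generator and conclude.
  obtain ⟨a, b, t, htp, haD, hbE, habt⟩ :=
    exists_single_generator I J (mulStab I J) (div_mul_div_le_mulStab I J)
      (fun s hs x hx => mulStab_smul_div₁ I J hs hx)
      (fun s hs x hx => mulStab_smul_div₂ I J hs hx) p h
  exact equiv_of_single_mul I J p a b t htp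
    (fun x hx => Submodule.mem_div_iff_forall_mul_mem.mp haD x hx)
    (fun x hx => Submodule.mem_div_iff_forall_mul_mem.mp hbE x hx) habt
end

section
/- Let R be an order in an étale algebra K, I and J fractional R-ideals, and p a maximal ideal of R. Then (I:J)_p (J:I)_p = (I:I)_p if and only if 1 ∈ (I:J)(J:I) + p. -/
universe u

section Aux

open IsLocalizedModule

variable {R₀ A B : Type*} [CommRing R₀] [CommRing A] [CommRing B] [Algebra R₀ A] [Algebra R₀ B]
  (p : Submonoid R₀) (f : A →ₐ[R₀] B) [IsLocalizedModule p f.toLinearMap]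

/-- Localization of submodules commutes with multiplication. -/
lemma aux_localized₀_mul (M N : Submodule R₀ A) :
    Submodule.localized₀ p f.toLinearMap (M * N) =
      Submodule.localized₀ p f.toLinearMap M * Submodule.localized₀ p f.toLinearMap N := by
  apply le_antisymm
  · rintro x ⟨m, hm, s, rfl⟩
    revert s
    refine Submodule.mul_induction_on hm ?_ ?_
    · intro a ha b hb s
      have h : mk' f.toLinearMap (a * b) s
          = mk' (S := p) f.toLinearMap a s * mk' (S := p) f.toLinearMap b 1 := by
        rw [IsLocalizedModule.mk'_mul_mk' (S := p) f, mul_one]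
      rw [h]
      exact Submodule.mul_mem_mul ⟨a, ha, s, rfl⟩ ⟨b, hb, 1, rfl⟩
    · intro x y hx hy s
      rw [mk'_add]
      exact add_mem (hx s) (hy s)
  · refine Submodule.mul_le.mpr ?_
    rintro _ ⟨a, ha, s, rfl⟩ _ ⟨b, hb, t, rfl⟩
    exact ⟨a * b, Submodule.mul_mem_mul ha hb, s * t,
      (IsLocalizedModule.mk'_mul_mk' (S := p) f a b s t).symm⟩

/-- Combine finitely many denominators into one. -/
lemma aux_span_smul {M : Submodule R₀ A} :
    ∀ (T : Finset A), (∀ x ∈ (T : Set A), ∃ s ∈ p, s • x ∈ M) →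
      ∃ s ∈ p, ∀ x ∈ Submodule.span R₀ (T : Set A), s • x ∈ M := by
  classical
  intro T
  induction T using Finset.induction_on with
  | empty =>
    intro _
    refine ⟨1, one_mem p, fun x hx => ?_⟩
    simp only [Finset.coe_empty, Submodule.span_empty, Submodule.mem_bot] at hx
    simp [hx]
  | @insert a T ha ih =>
    intro key
    obtain ⟨s₁, hs₁, hs₁M⟩ := key a (by simp)
    obtain ⟨s₂, hs₂, hs₂M⟩ := ih (fun x hx => key x (by simp [hx]))
    refine ⟨s₂ * s₁, mul_mem hs₂ hs₁, ?_⟩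
    intro x hx
    rw [Finset.coe_insert, Submodule.mem_span_insert] at hx
    obtain ⟨r, z, hz, rfl⟩ := hx
    rw [smul_add]
    refine add_mem ?_ ?_
    · have h2 : (s₂ * s₁) • (r • a) = (r * s₂) • (s₁ • a) := by
        rw [smul_smul, smul_smul]
        congr 1
        ring
      rw [h2]
      exact M.smul_mem _ hs₁M
    · rw [mul_comm, mul_smul]
      exact M.smul_mem _ (hs₂M z hz)

/-- Localizations of `M ≤ N` (`N` finitely generated) are equal iff some `s ∈ p` multiplies
`N` into `M`. -/
lemma aux_localized₀_eq_iff {M N : Submodule R₀ A} (hMN : M ≤ N) (hN : N.FG) :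
    Submodule.localized₀ p f.toLinearMap M = Submodule.localized₀ p f.toLinearMap N ↔
      ∃ s ∈ p, ∀ x ∈ N, s • x ∈ M := by
  constructor
  · intro h
    obtain ⟨T, rfl⟩ := hN
    have key : ∀ x ∈ (T : Set A), ∃ s ∈ p, s • x ∈ M := by
      intro x hx
      have hxN : f.toLinearMap x ∈
          Submodule.localized₀ p f.toLinearMap (Submodule.span R₀ (T : Set A)) :=
        ⟨x, Submodule.subset_span hx, 1, mk'_one p f.toLinearMap x⟩
      rw [← h] at hxN
      obtain ⟨m, hm, s, hms⟩ := hxN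
      rw [mk'_eq_iff] at hms
      have heq : f.toLinearMap m = f.toLinearMap ((s : R₀) • x) := by
        rw [map_smul]; exact hms
      obtain ⟨c, hc⟩ := IsLocalizedModule.exists_of_eq (S := p) (f := f.toLinearMap) heq
      refine ⟨(c : R₀) * (s : R₀), mul_mem c.2 s.2, ?_⟩
      have hcs : ((c : R₀) * (s : R₀)) • x = (c : R₀) • m := by
        rw [mul_smul, ← Submonoid.smul_def c, ← hc, Submonoid.smul_def]
      rw [hcs]
      exact M.smul_mem _ hm
    exact aux_span_smul p T key
  · rintro ⟨s, hs, hsM⟩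
    apply le_antisymm
    · rintro _ ⟨m, hm, t, rfl⟩
      exact ⟨m, hMN hm, t, rfl⟩
    · rintro _ ⟨n, hn, t, rfl⟩
      refine ⟨(⟨s, hs⟩ : p) • n, hsM n hn, ⟨s, hs⟩ * t,
        mk'_cancel_left f.toLinearMap n ⟨s, hs⟩ t⟩

/-- A submodule contained in a finitely generated submodule over a Noetherian ring is
finitely generated. -/
lemma aux_fg_of_le {Z M : Type*} [CommRing Z] [IsNoetherianRing Z] [AddCommGroup M] [Module Z M]
    {N P : Submodule Z M} (hP : P.FG) (h : N ≤ P) : N.FG := by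
  have h1 : IsNoetherian Z P := isNoetherian_of_fg_of_noetherian P hP
  have h2 := IsNoetherian.noetherian (Submodule.comap P.subtype N)
  have h3 := h2.map P.subtype
  rwa [Submodule.map_comap_subtype, inf_eq_right.mpr h] at h3

end Aux

variable (Z : Type*) (Q K : Type u) [CommRing Z] [IsDedekindDomain Z] [Field Q]
  [Algebra Z Q] [IsFractionRing Z Q] [CommRing K] [Algebra Q K] [Algebra Z K]
  [IsScalarTower Z Q K] [FiniteDimensional Q K] [Algebra.Etale Q K]

/- `R` is an order in the étale algebra `K`: a subring which is a `Z`-lattice.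
Fractional `R`-ideals are sub-`R`-modules of `K` which are `Z`-lattices. -/
variable (R : Subalgebra Z K) (hR : IsLat Z Q K (Subalgebra.toSubmodule R))

/-- For fractional `R`-ideals `I`, `J` and a maximal ideal `p` of the order `R`, one has
`(I:J)_p (J:I)_p = (I:I)_p` (localizations at `p` inside the localization `K_p` of `K`)
if and only if `1 ∈ (I:J)(J:I) + p`. -/
theorem localized_colon_mul_eq_iff (I J : Submodule ↥R K)
    (hI : IsLat Z Q K (I.restrictScalars Z)) (hJ : IsLat Z Q K (J.restrictScalars Z))
    (p : Ideal ↥R) [p.IsMaximal] :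
    (Submodule.localized₀ p.primeCompl
        ((IsScalarTower.toAlgHom ↥R K
          (Localization (Algebra.algebraMapSubmonoid K p.primeCompl))).toLinearMap) (I / J) *
      Submodule.localized₀ p.primeCompl
        ((IsScalarTower.toAlgHom ↥R K
          (Localization (Algebra.algebraMapSubmonoid K p.primeCompl))).toLinearMap) (J / I) =
      Submodule.localized₀ p.primeCompl
        ((IsScalarTower.toAlgHom ↥R K
          (Localization (Algebra.algebraMapSubmonoid K p.primeCompl))).toLinearMap) (I / I)) ↔
      (1 : K) ∈ (I / J) * (J / I) + Submodule.map (Algebra.linearMap ↥R K) p := by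
  classical
  set A := Localization (Algebra.algebraMapSubmonoid K p.primeCompl) with hA
  set f := IsScalarTower.toAlgHom (↥R) K A with hf
  set M := (I / J) * (J / I) with hM
  set SS := I / I with hSS
  -- basic algebraic facts
  have hMS : M ≤ SS := Submodule.mul_le.mpr fun a ha b hb =>
    Submodule.mem_div_iff_forall_mul_mem.mpr fun c hc => by
      rw [mul_assoc]
      exact Submodule.mem_div_iff_forall_mul_mem.mp ha _
        (Submodule.mem_div_iff_forall_mul_mem.mp hb c hc)
  have hJIS : (J / I) * SS ≤ J / I := Submodule.mul_le.mpr fun b hb a ha =>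
    Submodule.mem_div_iff_forall_mul_mem.mpr fun c hc => by
      rw [mul_assoc]
      exact Submodule.mem_div_iff_forall_mul_mem.mp hb _
        (Submodule.mem_div_iff_forall_mul_mem.mp ha c hc)
  have hMSM : M * SS ≤ M := by
    calc M * SS = (I / J) * ((J / I) * SS) := by rw [hM, mul_assoc]
    _ ≤ (I / J) * (J / I) := mul_le_mul_right hJIS _
    _ = M := hM.symm
  have h1S : (1 : K) ∈ SS :=
    Submodule.mem_div_iff_forall_mul_mem.mpr fun c hc => by rwa [one_mul]
  -- `I/I` is a finitely generated `R`-module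
  have hFG : SS.FG := by
    obtain ⟨u, hu, huI⟩ : ∃ u : K, IsUnit u ∧ u ∈ I := by
      have h1 : (1 : K) ∈ Submodule.span Q ((I.restrictScalars Z : Submodule Z K) : Set K) := by
        rw [hI.2]; trivial
      rw [Submodule.mem_span_set'] at h1
      obtain ⟨n, c, g, hcg⟩ := h1
      obtain ⟨b, hb⟩ := IsLocalization.exist_integer_multiples (nonZeroDivisors Z)
        (Finset.univ : Finset (Fin n)) c
      have hbe : algebraMap Q K (algebraMap Z Q (b : Z)) = (b : Z) • (1 : K) := by
        rw [← IsScalarTower.algebraMap_apply, Algebra.algebraMap_eq_smul_one]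
      refine ⟨algebraMap Q K (algebraMap Z Q (b : Z)), ?_, ?_⟩
      · refine IsUnit.map _ (isUnit_iff_ne_zero.mpr ?_)
        exact IsFractionRing.to_map_ne_zero_of_mem_nonZeroDivisors b.2
      · rw [hbe, ← hcg, Finset.smul_sum]
        refine Submodule.sum_mem I fun i _ => ?_
        obtain ⟨z, hz⟩ := hb i (Finset.mem_univ i)
        have : (b : Z) • (c i • (g i : K)) = z • (g i : K) := by
          rw [← smul_assoc, ← hz, algebraMap_smul]
        rw [this]
        exact Submodule.smul_mem (I.restrictScalars Z) z (g i).2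
    set v : K := ↑hu.unit⁻¹ with hv
    have huv : u * v = 1 := hu.mul_val_inv
    have hle : SS.restrictScalars Z ≤
        Submodule.map (LinearMap.mulLeft Z v) (I.restrictScalars Z) := by
      intro x hx
      have hxu : x * u ∈ I := Submodule.mem_div_iff_forall_mul_mem.mp hx u huI
      refine ⟨x * u, hxu, ?_⟩
      rw [LinearMap.mulLeft_apply]
      calc v * (x * u) = x * (u * v) := by ring
      _ = x := by rw [huv, mul_one]
    have hfg2 : (SS.restrictScalars Z).FG :=
      aux_fg_of_le ((hI.1).map (LinearMap.mulLeft Z v)) hle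
    exact Submodule.FG.of_restrictScalars Z (S := SS) hfg2
  rw [← aux_localized₀_mul p.primeCompl f (I / J) (J / I),
    aux_localized₀_eq_iff p.primeCompl f hMS hFG]
  constructor
  · rintro ⟨s, hs, hsM⟩
    have hsK : algebraMap (↥R) K s ∈ M := by
      have h := hsM 1 h1S
      rwa [Algebra.algebraMap_eq_smul_one]
    obtain ⟨r, q, hq, hrq⟩ := (inferInstance : p.IsMaximal).exists_inv hs
    rw [Submodule.add_eq_sup, Submodule.mem_sup]
    refine ⟨algebraMap (↥R) K (r * s), ?_, algebraMap (↥R) K q, ⟨q, hq, rfl⟩, ?_⟩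
    · rw [map_mul, ← Algebra.smul_def]
      exact M.smul_mem r hsK
    · rw [← map_add, hrq, map_one]
  · intro h1
    rw [Submodule.add_eq_sup, Submodule.mem_sup] at h1
    obtain ⟨m, hm, z, hz, hmz⟩ := h1
    obtain ⟨q, hq, rfl⟩ := hz
    refine ⟨1 - q, ?_, ?_⟩
    · intro hmem
      have h1p : (1 : ↥R) ∈ p := by
        have := add_mem hmem hq
        simpa using this
      exact (inferInstance : p.IsMaximal).ne_top (Ideal.eq_top_iff_one p |>.mpr h1p)
    · intro x hx
      have hq1 : algebraMap (↥R) K q = 1 - m := by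
        have : Algebra.linearMap (↥R) K q = algebraMap (↥R) K q := rfl
        rw [← this, ← hmz]; ring
      have hx1 : (1 - q) • x = m * x := by
        rw [sub_smul, one_smul, Algebra.smul_def, hq1]; ring
      rw [hx1]
      exact hMSM (Submodule.mul_mem_mul hm hx)
end

section
/- Let R be an order in an étale algebra K and I, J fractional R-ideals with 1 ∈ (I:J)(J:I). Then I and J have the same multiplicator ring R' = (I:I) = (J:J), the ideal L = (I:J) is an invertible fractional R'-ideal, and I = L·J. -/
universe u

section Aux

variable {R₀ : Type*} {A : Type*} [CommSemiring R₀] [CommRing A] [Algebra R₀ A]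

lemma div_mul_div_le (I J L : Submodule R₀ A) : (I / J) * (J / L) ≤ I / L := by
  rw [Submodule.mul_le]
  intro x hx y hy
  rw [Submodule.mem_div_iff_forall_mul_mem]
  intro c hc
  rw [mul_assoc]
  exact hx _ (hy _ hc)

lemma div_mul_le' (I J : Submodule R₀ A) : (I / J) * J ≤ I := by
  rw [Submodule.mul_le]
  intro x hx y hy
  exact hx _ hy

lemma le_mul_self_of_one_mem {M N : Submodule R₀ A} (h : (1 : A) ∈ M) : N ≤ M * N := by
  intro a ha
  simpa using Submodule.mul_mem_mul h ha

end Aux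

variable (Z : Type*) (Q K : Type u) [CommRing Z] [IsDedekindDomain Z] [Field Q]
  [Algebra Z Q] [IsFractionRing Z Q] [CommRing K] [Algebra Q K] [Algebra Z K]
  [IsScalarTower Z Q K] [FiniteDimensional Q K] [Algebra.Etale Q K]

/- `R` is an order in the étale algebra `K`: a subring which is a `Z`-lattice.
Fractional `R`-ideals are sub-`R`-modules of `K` which are `Z`-lattices. -/
variable (R : Subalgebra Z K) (hR : IsLat Z Q K (Subalgebra.toSubmodule R))

/-- If `1 ∈ (I:J)(J:I)` for fractional `R`-ideals `I`, `J`, then `I` and `J` have the same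
multiplicator ring `R' = (I:I) = (J:J)`, the colon ideal `L = (I:J)` is an invertible
fractional `R'`-ideal, and `I = L · J`. -/
theorem weakly_equivalent_structure (I J : Submodule ↥R K)
    (hI : IsLat Z Q K (I.restrictScalars Z)) (hJ : IsLat Z Q K (J.restrictScalars Z))
    (h : (1 : K) ∈ (I / J) * (J / I)) :
    I / I = J / J ∧ (I / J) * ((I / I) / (I / J)) = I / I ∧ I = (I / J) * J := by
  set L := I / J with hL
  set L' := J / I with hL'
  have hLL'I : L * L' ≤ I / I := div_mul_div_le I J I
  have hLL'J : L * L' ≤ J / J := by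
    rw [mul_comm]; exact div_mul_div_le J I J
  -- Key: for any M with M * L ≤ L (resp. M * L' ≤ L'), M ≤ L * L'.
  have key : ∀ M : Submodule ↥R K, M * (L * L') ≤ L * L' → M ≤ L * L' := by
    intro M hM
    refine le_trans (le_mul_self_of_one_mem h) ?_
    rwa [mul_comm] at hM
  have hII : I / I ≤ L * L' := by
    refine key _ ?_
    rw [← mul_assoc]
    exact mul_le_mul_left (div_mul_div_le I I J) L'
  have hJJ : J / J ≤ L * L' := by
    refine key _ ?_
    rw [mul_comm L L', ← mul_assoc]
    exact mul_le_mul_left (div_mul_div_le J J I) L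
  have heq : I / I = J / J := le_antisymm (hII.trans hLL'J) (hJJ.trans hLL'I)
  refine ⟨heq, ?_, ?_⟩
  · -- invertibility: L * ((I/I) / L) = I/I
    apply le_antisymm
    · rw [mul_comm]
      exact div_mul_le' (I / I) L
    · have h1 : L' ≤ (I / I) / L := by
        rw [Submodule.le_div_iff_mul_le, mul_comm]
        exact hLL'I
      calc I / I ≤ L * L' := hII
        _ ≤ L * ((I / I) / L) := mul_le_mul_right h1 L
  · -- I = L * J
    apply le_antisymm
    · have h2 : L' * I ≤ J := div_mul_le' J I
      calc I ≤ (L * L') * I := le_mul_self_of_one_mem h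
        _ = L * (L' * I) := mul_assoc _ _ _
        _ ≤ L * J := mul_le_mul_right h2 L
    · exact div_mul_le' I J
end

section
/- Let R be an order in an étale algebra K with maximal order O, p a maximal ideal of R, and n a positive integer such that (p^n O)_p ⊆ R_p. Set T = R + p^n O. Then pT is a maximal ideal of T and the natural map R/p → T/pT is an isomorphism of residue fields. -/
universe u

variable (Z : Type*) (Q K : Type u) [CommRing Z] [IsDedekindDomain Z] [Field Q]
  [Algebra Z Q] [IsFractionRing Z Q] [CommRing K] [Algebra Q K] [Algebra Z K]
  [IsScalarTower Z Q K] [FiniteDimensional Q K] [Algebra.Etale Q K]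

/- `R` is an order in the étale algebra `K`: a subring which is a `Z`-lattice.
Fractional `R`-ideals are sub-`R`-modules of `K` which are `Z`-lattices. -/
variable (R : Subalgebra Z K) (hR : IsLat Z Q K (Subalgebra.toSubmodule R))

set_option maxHeartbeats 1600000 in
set_option synthInstance.maxHeartbeats 400000 in
/-- Let `O` be the maximal order of `K` (the integral closure of `Z` in `K`, viewed as a
fractional `R`-ideal `O'`), `p` a maximal ideal of the order `R`, and `n ≥ 1` such that
`(p^n O)_p ⊆ R_p` (localizations at `p` inside `K_p`). If `T = R + p^n O`, then `pT` is a
maximal ideal of `T` and the natural map induces an isomorphism of residue fields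
`R/p ≃ T/pT`. -/
theorem extension_maximal_and_residue_iso (O' : Submodule ↥R K)
    (hO' : (O' : Set K) = (integralClosure Z K : Set K))
    (p : Ideal ↥R) [p.IsMaximal] (n : ℕ) (hn : 0 < n)
    (hloc : Submodule.localized₀ p.primeCompl
        ((IsScalarTower.toAlgHom ↥R K
          (Localization (Algebra.algebraMapSubmonoid K p.primeCompl))).toLinearMap)
        ((Submodule.map (Algebra.linearMap ↥R K) p) ^ n * O') ≤
      Submodule.localized₀ p.primeCompl
        ((IsScalarTower.toAlgHom ↥R K
          (Localization (Algebra.algebraMapSubmonoid K p.primeCompl))).toLinearMap)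
        (1 : Submodule ↥R K))
    (T : Subalgebra Z K) (hRT : R ≤ T)
    (hT : (T : Set K) =
      ((1 + (Submodule.map (Algebra.linearMap ↥R K) p) ^ n * O' : Submodule ↥R K) : Set K)) :
    (Ideal.map (Subalgebra.inclusion hRT) p).IsMaximal ∧
      Nonempty ((↥R ⧸ p) ≃+* (↥T ⧸ Ideal.map (Subalgebra.inclusion hRT) p)) := by
  classical
  set L := Localization (Algebra.algebraMapSubmonoid K p.primeCompl) with hL
  set f : K →ₗ[↥R] L := (IsScalarTower.toAlgHom ↥R K L).toLinearMap with hf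
  set pK : Submodule ↥R K := Submodule.map (Algebra.linearMap ↥R K) p with hpKdef
  set M : Submodule ↥R K := pK ^ n * O' with hMdef
  set ι : ↥R →ₐ[Z] ↥T := Subalgebra.inclusion hRT with hι
  set pT : Ideal ↥T := Ideal.map ι p with hpTdef
  have hinj : Function.Injective (algebraMap ↥R K) := Subtype.coe_injective
  -- key localization consequence: every element of M has a "denominator" outside p
  -- landing in R
  have key : ∀ x ∈ M, ∃ u : ↥R, u ∈ p.primeCompl ∧ u • x ∈ (1 : Submodule ↥R K) := by
    intro x hx
    have h1 : f x ∈ Submodule.localized₀ p.primeCompl f M :=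
      ⟨x, hx, 1, IsLocalizedModule.mk'_one p.primeCompl f x⟩
    obtain ⟨m, hm, s, hms⟩ := hloc h1
    rw [IsLocalizedModule.mk'_eq_iff] at hms
    rw [Submonoid.smul_def, ← map_smul] at hms
    obtain ⟨c, hc⟩ := IsLocalizedModule.exists_of_eq (S := p.primeCompl) (f := f) hms
    refine ⟨(c : ↥R) * (s : ↥R), mul_mem c.2 s.2, ?_⟩
    rw [mul_smul]
    simp only [Submonoid.smul_def] at hc
    rw [← hc]
    exact Submodule.smul_mem _ _ hm
  have hpK_le : pK ≤ 1 := by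
    rintro _ ⟨a, _, rfl⟩
    exact Submodule.mem_one.mpr ⟨a, rfl⟩
  have hpKn_le : pK ^ n ≤ 1 := by
    have : ∀ k : ℕ, pK ^ k ≤ 1 := by
      intro k
      induction k with
      | zero => simp [pow_zero]
      | succ k ih =>
        rw [pow_succ]
        calc pK ^ k * pK ≤ 1 * 1 := mul_le_mul' ih hpK_le
          _ = 1 := one_mul 1
    exact this n
  have hO'mem : ∀ x : K, x ∈ O' ↔ x ∈ integralClosure Z K := by
    intro x
    rw [← SetLike.mem_coe, hO', SetLike.mem_coe]
  have hO'mul : O' * O' ≤ O' := by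
    rw [Submodule.mul_le]
    intro a ha b hb
    rw [hO'mem] at ha hb ⊢
    exact mul_mem ha hb
  have hMM : M * M ≤ M := by
    calc M * M = (pK ^ n * (O' * O')) * pK ^ n := by rw [hMdef]; ring
      _ ≤ (pK ^ n * O') * 1 :=
        mul_le_mul' (mul_le_mul' le_rfl hO'mul) hpKn_le
      _ = M := by rw [mul_one, hMdef]
  -- Step A : M ⊆ R + pM
  have hStepA : ∀ x ∈ M, x ∈ (1 : Submodule ↥R K) + pK * M := by
    intro x hx
    obtain ⟨u, hu, hux⟩ := key x hx
    obtain ⟨v, a, ha, hva⟩ := Ideal.IsMaximal.exists_inv ‹p.IsMaximal› hu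
    have hx' : x = v • (u • x) + a • x := by
      calc x = (v * u + a) • x := by rw [hva, one_smul]
        _ = v • (u • x) + a • x := by rw [add_smul, mul_smul]
    rw [hx', Submodule.add_eq_sup]
    refine add_mem (Submodule.mem_sup_left (Submodule.smul_mem _ _ hux))
      (Submodule.mem_sup_right ?_)
    rw [Algebra.smul_def]
    exact Submodule.mul_mem_mul ⟨a, ha, rfl⟩ hx
  -- denominators for elements of pK * M, landing in pK
  have keyMul : ∀ z ∈ pK * M, ∃ u : ↥R, u ∈ p.primeCompl ∧ u • z ∈ pK := by
    intro z hz
    refine Submodule.mul_induction_on hz ?_ ?_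
    · intro a ha m hm
      obtain ⟨u, hu, hum⟩ := key m hm
      refine ⟨u, hu, ?_⟩
      rw [← mul_smul_comm]
      obtain ⟨r, hr⟩ := Submodule.mem_one.mp hum
      rw [← hr, mul_comm, ← Algebra.smul_def]
      exact Submodule.smul_mem _ _ ha
    · rintro z1 z2 ⟨u1, hu1, h1⟩ ⟨u2, hu2, h2⟩
      refine ⟨u1 * u2, mul_mem hu1 hu2, ?_⟩
      rw [smul_add]
      have e1 : (u1 * u2) • z1 ∈ pK := by
        rw [mul_comm, mul_smul]; exact Submodule.smul_mem _ _ h1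
      have e2 : (u1 * u2) • z2 ∈ pK := by
        rw [mul_smul]; exact Submodule.smul_mem _ _ h2
      exact add_mem e1 e2
  -- Step B/C ingredient : r ∈ R landing in pK + pK*M is in p
  have keyR : ∀ r : ↥R, algebraMap ↥R K r ∈ pK + pK * M → r ∈ p := by
    intro r hr
    rw [Submodule.add_eq_sup, Submodule.mem_sup] at hr
    obtain ⟨y, hy, z, hz, hyz⟩ := hr
    obtain ⟨u, hu, huz⟩ := keyMul z hz
    have hmem : u • algebraMap ↥R K r ∈ pK := by
      rw [← hyz, smul_add]
      exact add_mem (Submodule.smul_mem _ _ hy) huz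
    have h2 : algebraMap ↥R K (u * r) ∈ pK := by
      rw [map_mul, ← Algebra.smul_def]; exact hmem
    obtain ⟨a, ha, haa⟩ := h2
    have hau : a = u * r := hinj haa
    rw [hau] at ha
    rcases (Ideal.IsMaximal.isPrime ‹p.IsMaximal›).mem_or_mem ha with h | h
    · exact absurd h hu
    · exact h
  -- multiplication stability
  have hS1 : ((1 : Submodule ↥R K) + M) * (pK + pK * M) ≤ pK + pK * M := by
    have e : ((1 : Submodule ↥R K) + M) * (pK + pK * M)
        = (pK + pK * M) + (pK * M + pK * (M * M)) := by ring
    rw [e]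
    simp only [Submodule.add_eq_sup]
    refine sup_le le_rfl (sup_le le_sup_right ?_)
    exact le_trans (mul_le_mul' le_rfl hMM) le_sup_right
  have hTmem : ∀ t : ↥T, (t : K) ∈ (1 : Submodule ↥R K) + M := by
    intro t
    have ht : (t : K) ∈ (T : Set K) := t.2
    rw [hT] at ht
    exact ht
  have hMT : ∀ x ∈ M, x ∈ T := by
    intro x hx
    have h1 : x ∈ (1 + M : Submodule ↥R K) := by
      rw [Submodule.add_eq_sup]; exact Submodule.mem_sup_right hx
    have h2 : x ∈ ((1 + M : Submodule ↥R K) : Set K) := h1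
    rw [← hT] at h2
    exact h2
  -- elements of T whose image lies in pK * M are in pT
  have hzT : ∀ z ∈ pK * M, ∃ tt : ↥T, (tt : K) = z ∧ tt ∈ pT := by
    intro z hz
    refine Submodule.mul_induction_on hz ?_ ?_
    · rintro _ ⟨a₀, ha₀, rfl⟩ m hm
      have hmT : m ∈ T := hMT m hm
      refine ⟨ι a₀ * ⟨m, hmT⟩, ?_, Ideal.mul_mem_right _ _ (Ideal.mem_map_of_mem ι ha₀)⟩
      rfl
    · rintro z1 z2 ⟨t1, e1, m1⟩ ⟨t2, e2, m2⟩
      exact ⟨t1 + t2, by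
        rw [show ((t1 + t2 : ↥T) : K) = (t1 : K) + (t2 : K) from rfl, e1, e2], add_mem m1 m2⟩
  -- image of pT in K
  have hpT_im : ∀ t : ↥T, t ∈ pT → (t : K) ∈ pK + pK * M := by
    intro t ht
    rw [hpTdef, Ideal.map] at ht
    refine Submodule.span_induction ?_ ?_ ?_ ?_ ht
    · rintro _ ⟨a, ha, rfl⟩
      rw [Submodule.add_eq_sup]
      exact Submodule.mem_sup_left ⟨a, ha, rfl⟩
    · have h0 : ((0 : ↥T) : K) = 0 := rfl
      rw [h0]
      exact Submodule.zero_mem _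
    · intro x y _ _ hx hy
      have : ((x + y : ↥T) : K) = (x : K) + (y : K) := rfl
      rw [this]
      exact add_mem hx hy
    · intro c x _ ih
      have : ((c • x : ↥T) : K) = (c : K) * (x : K) := rfl
      rw [this]
      exact hS1 (Submodule.mul_mem_mul (hTmem c) ih)
  -- the ring hom R → T/pT
  set φ : ↥R →+* ↥T ⧸ pT := (Ideal.Quotient.mk pT).comp ι.toRingHom with hφ
  have hsurj : Function.Surjective φ := by
    intro q
    obtain ⟨t, rfl⟩ := Ideal.Quotient.mk_surjective q
    have h1 := hTmem t
    rw [Submodule.add_eq_sup, Submodule.mem_sup] at h1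
    obtain ⟨y, hy, m, hm, hym⟩ := h1
    have h2 := hStepA m hm
    rw [Submodule.add_eq_sup, Submodule.mem_sup] at h2
    obtain ⟨y', hy', z, hz, hyz⟩ := h2
    obtain ⟨r, hr⟩ := Submodule.mem_one.mp (add_mem hy hy')
    obtain ⟨tt, ett, htt⟩ := hzT z hz
    refine ⟨r, ?_⟩
    have hteq : t = ι r + tt := by
      apply Subtype.coe_injective
      show (t : K) = algebraMap ↥R K r + (tt : K)
      rw [ett, hr, ← hym, ← hyz]
      ring
    rw [hφ]
    show Ideal.Quotient.mk pT (ι r) = Ideal.Quotient.mk pT t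
    rw [hteq, map_add, Ideal.Quotient.eq_zero_iff_mem.mpr htt, add_zero]
  have hker : RingHom.ker φ = p := by
    ext r
    rw [RingHom.mem_ker, hφ, RingHom.comp_apply, Ideal.Quotient.eq_zero_iff_mem]
    constructor
    · intro h
      exact keyR r (hpT_im (ι r) h)
    · intro h
      exact Ideal.mem_map_of_mem ι h
  have e : (↥R ⧸ p) ≃+* (↥T ⧸ pT) :=
    (Ideal.quotEquivOfEq hker.symm).trans (RingHom.quotientKerEquivOfSurjective hsurj)
  have hfield : IsField (↥T ⧸ pT) :=
    MulEquiv.isField ((Ideal.Quotient.maximal_ideal_iff_isField_quotient p).mp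
      ‹p.IsMaximal›) e.symm.toMulEquiv
  exact ⟨Ideal.Quotient.maximal_of_isField pT hfield, ⟨e⟩⟩
end

section
/- Let R be an order in an étale algebra K and p a maximal ideal of R. Then the order T = (p : p) satisfies (R : (R : T)) = T. -/
universe u

variable (Z : Type*) (Q K : Type u) [CommRing Z] [IsDedekindDomain Z] [Field Q]
  [Algebra Z Q] [IsFractionRing Z Q] [CommRing K] [Algebra Q K] [Algebra Z K]
  [IsScalarTower Z Q K] [FiniteDimensional Q K] [Algebra.Etale Q K]

/- `R` is an order in the étale algebra `K`: a subring which is a `Z`-lattice.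
Fractional `R`-ideals are sub-`R`-modules of `K` which are `Z`-lattices. -/
variable (R : Subalgebra Z K) (hR : IsLat Z Q K (Subalgebra.toSubmodule R))



open Submodule in
lemma aux_div_div {A B : Type*} [CommRing A] [CommRing B] [Algebra A B]
    (p : Ideal A) (hp : p.IsMaximal) :
    1 / (1 / (Submodule.map (Algebra.linearMap A B) p / Submodule.map (Algebra.linearMap A B) p))
      = Submodule.map (Algebra.linearMap A B) p / Submodule.map (Algebra.linearMap A B) p := by
  set f := Algebra.linearMap A B with hf'
  set P := Submodule.map f p with hPdef
  set T := P / P with hTdef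
  have h1 : (1 : Submodule A B) = LinearMap.range f := Submodule.one_eq_range
  have hP1 : P ≤ 1 := by rw [h1]; exact LinearMap.map_le_range
  have key : ∀ x ∈ (1 : Submodule A B), ∀ (M : Submodule A B), ∀ y ∈ M, x * y ∈ M := by
    rintro x hx M y hy
    rw [h1] at hx
    obtain ⟨a, rfl⟩ := hx
    show algebraMap A B a * y ∈ M
    rw [← Algebra.smul_def]
    exact M.smul_mem a hy
  have hone : (1 : Submodule A B) / 1 = 1 := by
    apply le_antisymm
    · intro x hx
      simpa using mem_div_iff_forall_mul_mem.mp hx 1 (one_le.mp le_rfl)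
    · intro x hx
      exact mem_div_iff_forall_mul_mem.mpr fun y hy => key x hx 1 y hy
  have hT1 : (1 : Submodule A B) ≤ T := fun x hx =>
    mem_div_iff_forall_mul_mem.mpr fun y hy => key x hx P y hy
  have squeeze : ∀ M : Submodule A B, P ≤ M → M ≤ 1 → M = P ∨ M = 1 := by
    intro M hPM hM1
    have hMr : M ≤ LinearMap.range f := h1 ▸ hM1
    have hM : Submodule.map f (Submodule.comap f M) = M := Submodule.map_comap_eq_self hMr
    by_cases hq : Submodule.comap f M = ⊤
    · right; rw [← hM, hq, Submodule.map_top, ← h1]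
    · left
      have hpq : p ≤ Submodule.comap f M := le_trans (Submodule.le_comap_map f p) (Submodule.comap_mono hPM)
      rw [← hM, ← hp.eq_of_le hq hpq]
  have hPI : P ≤ 1 / T := fun x hx => mem_div_iff_forall_mul_mem.mpr fun y hy => by
    rw [mul_comm]; exact hP1 (mem_div_iff_forall_mul_mem.mp hy x hx)
  have hI1 : 1 / T ≤ 1 := fun x hx => by
    simpa using mem_div_iff_forall_mul_mem.mp hx 1 (one_le.mp hT1)
  rcases squeeze (1 / T) hPI hI1 with hcase | hcase
  · rw [hcase]
    -- goal : 1 / P = T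
    have hTle : T ≤ 1 / P := fun t ht =>
      mem_div_iff_forall_mul_mem.mpr fun y hy => hP1 (mem_div_iff_forall_mul_mem.mp ht y hy)
    have hlo : P ≤ 1 / P * P := by
      have h1le : (1 : Submodule A B) ≤ 1 / P := fun x hx =>
        mem_div_iff_forall_mul_mem.mpr fun y hy => key x hx 1 y (hP1 hy)
      calc P = 1 * P := (one_mul P).symm
        _ ≤ 1 / P * P := mul_le_mul' h1le le_rfl
    have hhi : 1 / P * P ≤ 1 := Submodule.mul_le.mpr fun x hx y hy =>
      mem_div_iff_forall_mul_mem.mp hx y hy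
    rcases squeeze (1 / P * P) hlo hhi with h2 | h2
    · refine le_antisymm (fun x hx => mem_div_iff_forall_mul_mem.mpr fun y hy => ?_) hTle
      rw [← h2]
      exact Submodule.mul_mem_mul hx hy
    · -- 1/P * P = 1, so T ≤ 1 hence T = 1, hence P = 1/T = 1/1 = 1
      have hTP : T * P ≤ P := Submodule.mul_le.mpr fun x hx y hy =>
        mem_div_iff_forall_mul_mem.mp hx y hy
      have hTle1 : T ≤ 1 := by
        calc T = T * 1 := (mul_one T).symm
          _ = T * (1 / P * P) := by rw [h2]
          _ = 1 / P * (T * P) := by ring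
          _ ≤ 1 / P * P := mul_le_mul' le_rfl hTP
          _ = 1 := h2
      have hTeq : T = 1 := le_antisymm hTle1 hT1
      have hPeq : P = 1 := by rw [← hcase, hTeq, hone]
      rw [hPeq, hone, hTeq]
  · rw [hcase, hone]
    have hTle1 : T ≤ 1 := fun t ht => by
      have h1mem : (1 : B) ∈ 1 / T := by rw [hcase]; exact one_le.mp le_rfl
      simpa using mem_div_iff_forall_mul_mem.mp h1mem t ht
    exact (le_antisymm hTle1 hT1).symm

/-- For a maximal ideal `p` of the order `R`, the order `T = (p : p)` satisfies
`(R : (R : T)) = T`. -/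
theorem one_div_one_div_multiplicatorRing (p : Ideal ↥R) (hp : p.IsMaximal) :
    1 / (1 / (Submodule.map (Algebra.linearMap ↥R K) p /
        Submodule.map (Algebra.linearMap ↥R K) p)) =
      Submodule.map (Algebra.linearMap ↥R K) p / Submodule.map (Algebra.linearMap ↥R K) p := by
  exact aux_div_div p hp
end

section
/- Let R ⊆ T be orders in an étale algebra K satisfying (R:(R:T)) = T, and let p be a maximal ideal of R containing the conductor (R:T). Then (p : p) ⊆ T. -/
universe u

variable (Z : Type*) (Q K : Type u) [CommRing Z] [IsDedekindDomain Z] [Field Q]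
  [Algebra Z Q] [IsFractionRing Z Q] [CommRing K] [Algebra Q K] [Algebra Z K]
  [IsScalarTower Z Q K] [FiniteDimensional Q K] [Algebra.Etale Q K]

/- `R` is an order in the étale algebra `K`: a subring which is a `Z`-lattice.
Fractional `R`-ideals are sub-`R`-modules of `K` which are `Z`-lattices. -/
variable (R : Subalgebra Z K) (hR : IsLat Z Q K (Subalgebra.toSubmodule R))

/-- Let `R ⊆ T` be orders with `(R : (R : T)) = T` and let `p` be a maximal ideal of `R`
containing the conductor `(R : T)`. Then `(p : p) ⊆ T`. -/
theorem colon_self_le_of_conductor_le (T : Subalgebra Z K)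
    (hT : IsLat Z Q K (Subalgebra.toSubmodule T)) (hRT : R ≤ T)
    (TM : Submodule ↥R K) (hTM : (TM : Set K) = (T : Set K))
    (h1 : 1 / (1 / TM) = TM)
    (p : Ideal ↥R) (hp : p.IsMaximal)
    (hcond : 1 / TM ≤ Submodule.map (Algebra.linearMap ↥R K) p) :
    Submodule.map (Algebra.linearMap ↥R K) p / Submodule.map (Algebra.linearMap ↥R K) p ≤ TM := by
  rw [← h1]
  intro x hx
  rw [Submodule.mem_div_iff_forall_mul_mem] at hx ⊢
  intro y hy
  have hyp : y ∈ Submodule.map (Algebra.linearMap ↥R K) p := hcond hy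
  have hxy := hx y hyp
  have hle : Submodule.map (Algebra.linearMap ↥R K) p ≤ 1 := by
    rw [Submodule.one_eq_range]
    exact LinearMap.map_le_range
  exact hle hxy
end
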